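/- Let 𝒩 be a connected plane Euclidean network and let p, q ∈ 𝒩_ℓ be diametral points (d(p,q) = diam(𝒩_ℓ)) with p lying on a non-pendant edge uv and q lying on a different non-pendant edge u'v'. Then d(p,q) = ‖p−u‖ + d(u,q) = ‖p−v‖ + d(v,q) = ‖q−u'‖ + d(u',p) = ‖q−v'‖ + d(v',p); moreover, either (d(p,q) = ‖p−u‖ + d(u,u') + ‖u'−q‖ and d(p,q) = ‖p−v‖ + d(v,v') + ‖v'−q‖), or (d(p,q) = ‖p−u‖ + d(u,v') + ‖v'−q‖ and d(p,q) = ‖p−v‖ + d(v,u') + ‖u'−q‖). (That is, there exist two shortest p–q paths P₁ and P₂ such that either u,u' ∈ P₁ and v,v' ∈ P₂, or u,v' ∈ P₁ and v,u' ∈ P₂.) -/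

import Mathlib

open Set
open scoped ENNReal

noncomputable section

attribute [local instance] Classical.propDecidable

/-- Points of the Euclidean plane. -/
abbrev Pt : Type := EuclideanSpace ℝ (Fin 2)

/-- Intrinsic (geodesic) distance inside a set `X ⊆ ℝ²`: the infimum of the lengths
(total variations) of continuous paths from `p` to `q` whose image lies in `X`. -/
def idist (X : Set Pt) (p q : Pt) : ℝ≥0∞ :=
  ⨅ (γ : ℝ → Pt) (_ : ContinuousOn γ (Set.Icc 0 1)) (_ : γ '' Set.Icc 0 1 ⊆ X)
    (_ : γ 0 = p) (_ : γ 1 = q), eVariationOn γ (Set.Icc 0 1)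

/-- Eccentricity of a point within `X`. -/
def ecc (X : Set Pt) (p : Pt) : ℝ≥0∞ := ⨆ q ∈ X, idist X p q

/-- Intrinsic diameter of `X`. -/
def idiam (X : Set Pt) : ℝ≥0∞ := ⨆ p ∈ X, ecc X p

/-- A plane Euclidean network: a finite set of vertices in the plane together with a
finite set of straight-line edges (recorded as ordered pairs of distinct vertices, each
edge recorded exactly once), such that two distinct edges meet only in common endpoints. -/
structure PlaneNetwork where
  V : Finset Pt
  Edg : Finset (Pt × Pt)
  ends_mem : ∀ e ∈ Edg, e.1 ∈ V ∧ e.2 ∈ V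
  ends_ne : ∀ e ∈ Edg, e.1 ≠ e.2
  no_swap : ∀ e ∈ Edg, (e.2, e.1) ∉ Edg
  vertex_cover : ∀ v ∈ V, ∃ e ∈ Edg, v = e.1 ∨ v = e.2
  plane : ∀ e ∈ Edg, ∀ f ∈ Edg, e ≠ f →
    segment ℝ e.1 e.2 ∩ segment ℝ f.1 f.2 ⊆ ({e.1, e.2} ∩ {f.1, f.2} : Set Pt)

namespace PlaneNetwork

/-- The locus of a network: the union of all its (closed) edges. -/
def locus (N : PlaneNetwork) : Set Pt := ⋃ e ∈ N.Edg, segment ℝ e.1 e.2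

/-- A network is connected when its locus is path-connected. -/
def Connected (N : PlaneNetwork) : Prop := IsPathConnected N.locus

/-- `u` and `v` are joined by an edge of the network. -/
def IsEdge (N : PlaneNetwork) (u v : Pt) : Prop := (u, v) ∈ N.Edg ∨ (v, u) ∈ N.Edg

/-- A vertex is pendant if it is an endpoint of exactly one edge. -/
def IsPendantVertex (N : PlaneNetwork) (v : Pt) : Prop :=
  v ∈ N.V ∧ (N.Edg.filter (fun e => e.1 = v ∨ e.2 = v)).card = 1

/-- The number of pendant vertices of a network. -/
def pendantCount (N : PlaneNetwork) : ℕ := (N.V.filter fun v => N.IsPendantVertex v).card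

end PlaneNetwork

/-- The union of a set with all the segments in a list. -/
def insertSegs (X : Set Pt) (L : List (Pt × Pt)) : Set Pt :=
  X ∪ ⋃ s ∈ L, segment ℝ s.1 s.2

/-- The segments of the list are inserted iteratively: the endpoints of the first one lie
on `X`, and the endpoints of each subsequent segment lie on the union of `X` with the
previously inserted segments. -/
def ValidSegs (X : Set Pt) : List (Pt × Pt) → Prop
  | [] => True
  | s :: rest => s.1 ∈ X ∧ s.2 ∈ X ∧ ValidSegs (X ∪ segment ℝ s.1 s.2) rest

/-- A shortcut set for `X`: a finite sequence of iteratively inserted segments whose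
insertion strictly decreases the intrinsic diameter. -/
def IsShortcutSet (X : Set Pt) (L : List (Pt × Pt)) : Prop :=
  ValidSegs X L ∧ idiam (insertSegs X L) < idiam X

/-- `X` admits a shortcut set. -/
def HasShortcutSet (X : Set Pt) : Prop := ∃ L, IsShortcutSet X L

/-- The shortcut number: the minimum size of a shortcut set. -/
def scn (X : Set Pt) : ℕ :=
  sInf {k | ∃ L : List (Pt × Pt), L.length = k ∧ IsShortcutSet X L}


open scoped Topology

/-!
Since distinct edges meet only at common endpoints, a path in the locus that enters the interior
of an edge does so through one of its endpoints. So if `p` on the edge `uv` is a farthest point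
from `q`, then `d(q, p) = d(q, u) + ‖u - p‖`: otherwise the points of the edge just before `p`
on the side of `u` would be farther from `q` than `p`, both via `u` (by continuity) and via `v`
(being farther from `v`). Applied to the diametral pair in both directions this gives the four
endpoint identities. A shortest path from `u` to `q` enters `u'v'` through `u'` or `v'`, so
`u` lies on a shortest `p`–`q` path through `u'` or through `v'`; the same holds for `v`, and
symmetrically for `u'` and `v'` with respect to `u`, `v`. These four alternatives force one of
the two pairings.
-/

lemma notMem_pair_of_mem_openSegment {E : Type*} [AddCommGroup E] [Module ℝ E] {x u v : E}
    (huv : u ≠ v) (hx : x ∈ openSegment ℝ u v) : x ∉ ({u, v} : Set E) := by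
  rintro (rfl | rfl)
  · exact huv (left_mem_openSegment_iff.1 hx)
  · exact huv (right_mem_openSegment_iff.1 hx)

lemma isClosed_segment {E : Type*} [NormedAddCommGroup E] [NormedSpace ℝ E] (x y : E) :
    IsClosed (segment ℝ x y) := by
  rw [segment_eq_image_lineMap]
  exact (isCompact_Icc.image AffineMap.lineMap_continuous).isClosed

lemma edist_right_lineMap_lt {E : Type*} [NormedAddCommGroup E] [NormedSpace ℝ E] {u v : E}
    (huv : u ≠ v) {s t : ℝ} (hst : s < t) (ht : t ≤ 1) :
    edist v (AffineMap.lineMap u v t) < edist v (AffineMap.lineMap u v s) := by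
  rw [edist_dist, edist_dist, dist_right_lineMap, dist_right_lineMap,
    Real.norm_of_nonneg (by linarith), Real.norm_of_nonneg (by linarith),
    ENNReal.ofReal_lt_ofReal_iff (mul_pos (by linarith) (dist_pos.2 huv))]
  exact mul_lt_mul_of_pos_right (by linarith) (dist_pos.2 huv)

section IntrinsicDistance

variable {X : Set Pt}

lemma idist_le_eVariationOn {p q : Pt} {γ : ℝ → Pt} (hc : ContinuousOn γ (Icc 0 1))
    (hX : γ '' Icc 0 1 ⊆ X) (h0 : γ 0 = p) (h1 : γ 1 = q) :
    idist X p q ≤ eVariationOn γ (Icc 0 1) :=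
  iInf_le_of_le γ <| iInf_le_of_le hc <| iInf_le_of_le hX <| iInf_le_of_le h0 <| iInf_le _ h1

lemma le_idist {p q : Pt} {c : ℝ≥0∞}
    (h : ∀ γ : ℝ → Pt, ContinuousOn γ (Icc 0 1) → γ '' Icc 0 1 ⊆ X → γ 0 = p → γ 1 = q →
      c ≤ eVariationOn γ (Icc 0 1)) :
    c ≤ idist X p q := by
  simp only [idist, le_iInf_iff]
  exact h

lemma idist_le_eVariationOn_Icc {γ : ℝ → Pt} {a b : ℝ} (hab : a ≤ b)
    (hc : ContinuousOn γ (Icc a b)) (hX : γ '' Icc a b ⊆ X) :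
    idist X (γ a) (γ b) ≤ eVariationOn γ (Icc a b) := by
  set φ : ℝ → ℝ := ⇑(AffineMap.lineMap (k := ℝ) a b)
  have hφ : φ '' Icc 0 1 = Icc a b := by
    rw [← segment_eq_image_lineMap, segment_eq_Icc hab]
  have hmono : MonotoneOn φ (Icc 0 1) := fun s _ t _ hst => by
    simp only [φ, AffineMap.lineMap_apply_ring']
    nlinarith
  calc idist X (γ a) (γ b) ≤ eVariationOn (γ ∘ φ) (Icc 0 1) := by
        refine idist_le_eVariationOn
          (hc.comp (by fun_prop) (mapsTo_iff_image_subset.2 hφ.subset))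
          (by rwa [image_comp, hφ]) ?_ ?_ <;> simp [φ]
    _ = eVariationOn γ (Icc a b) := by rw [eVariationOn.comp_eq_of_monotoneOn γ φ hmono, hφ]

lemma idist_comm (p q : Pt) : idist X p q = idist X q p := by
  suffices h : ∀ p q : Pt, idist X q p ≤ idist X p q from le_antisymm (h q p) (h p q)
  intro p q
  refine le_idist fun γ hc hX h0 h1 => ?_
  have hφ : (fun t : ℝ => 1 - t) '' Icc 0 1 = Icc 0 1 := by simp [image_const_sub_Icc]
  have hanti : AntitoneOn (fun t : ℝ => 1 - t) (Icc 0 1) := fun s _ t _ hst => by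
    simp only; linarith
  calc idist X q p ≤ eVariationOn (γ ∘ fun t => 1 - t) (Icc 0 1) :=
        idist_le_eVariationOn (hc.comp (by fun_prop) (mapsTo_iff_image_subset.2 hφ.subset))
          (by rwa [image_comp, hφ]) (by simpa using h1) (by simpa using h0)
    _ = eVariationOn γ (Icc 0 1) := by
        rw [eVariationOn.comp_eq_of_antitoneOn γ _ hanti, hφ]

lemma idist_triangle (p r q : Pt) : idist X p q ≤ idist X p r + idist X r q := by
  conv_rhs => simp only [idist, ENNReal.iInf_add, ENNReal.add_iInf]
  simp only [le_iInf_iff]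
  intro γ₂ hc₂ hX₂ h0₂ h1₂ γ₁ hc₁ hX₁ h0₁ h1₁
  set γ : ℝ → Pt := fun t => if t ≤ 1 then γ₁ t else γ₂ (t - 1)
  have hshift : (fun t : ℝ => t - 1) '' Icc 1 2 = Icc 0 1 := by norm_num [image_sub_const_Icc]
  have hγ₁ : EqOn γ γ₁ (Icc 0 1) := fun t ht => if_pos ht.2
  have hγ₂ : EqOn γ (γ₂ ∘ fun t => t - 1) (Icc 1 2) := by
    intro t ht
    rcases ht.1.eq_or_lt with rfl | h
    · simp [γ, h1₁, h0₂]
    · simp [γ, not_le.2 h]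
  have hsplit : Icc (0 : ℝ) 2 = Icc 0 1 ∪ Icc 1 2 :=
    (Icc_union_Icc_eq_Icc zero_le_one one_le_two).symm
  have hc : ContinuousOn γ (Icc 0 2) := by
    rw [hsplit]
    exact (hc₁.congr hγ₁).union_of_isClosed
      ((hc₂.comp (by fun_prop) (mapsTo_iff_image_subset.2 hshift.subset)).congr hγ₂)
      isClosed_Icc isClosed_Icc
  have hX : γ '' Icc 0 2 ⊆ X := by
    rw [hsplit, image_union, hγ₁.image_eq, hγ₂.image_eq, image_comp, hshift]
    exact union_subset hX₁ hX₂
  have hvar :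
      eVariationOn γ (Icc 0 2) = eVariationOn γ₁ (Icc 0 1) + eVariationOn γ₂ (Icc 0 1) := by
    have hmono : MonotoneOn (fun t : ℝ => t - 1) (Icc 1 2) := fun s _ t _ hst => by simp [hst]
    have := eVariationOn.Icc_add_Icc γ (s := univ) zero_le_one one_le_two (mem_univ 1)
    simp only [univ_inter] at this
    rw [← this, eVariationOn.eq_of_eqOn hγ₁, eVariationOn.eq_of_eqOn hγ₂,
      eVariationOn.comp_eq_of_monotoneOn _ _ hmono, hshift]
  have h0 : γ 0 = p := by simp [γ, h0₁]
  have h2 : γ 2 = q := by norm_num [γ, h1₂]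
  simpa only [h0, h2, hvar] using idist_le_eVariationOn_Icc zero_le_two hc hX

lemma idist_le_edist_of_segment_subset {x y : Pt} (h : segment ℝ x y ⊆ X) :
    idist X x y ≤ edist x y := by
  have hlip := (lipschitzWith_lineMap (𝕜 := ℝ) x y).lipschitzOnWith.comp_eVariationOn_le
    (mapsTo_univ id (Icc (0 : ℝ) 1))
  refine (idist_le_eVariationOn (AffineMap.lineMap_continuous.continuousOn)
    (by rwa [← segment_eq_image_lineMap]) (AffineMap.lineMap_apply_zero _ _)
    (AffineMap.lineMap_apply_one _ _)).trans ?_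
  rw [Function.comp_id, eVariationOn_id_Icc, sub_zero, ENNReal.ofReal_one, mul_one] at hlip
  rwa [edist_nndist]

lemma idist_le_idiam {x y : Pt} (hx : x ∈ X) (hy : y ∈ X) : idist X x y ≤ idiam X :=
  (le_iSup₂_of_le y hy le_rfl).trans (le_iSup₂_of_le (f := fun x _ => ecc X x) x hx le_rfl)

lemma idist_le_edist_add_idist_add_edist {p a b q : Pt} (hpa : segment ℝ p a ⊆ X)
    (hbq : segment ℝ b q ⊆ X) : idist X p q ≤ edist p a + idist X a b + edist b q :=
  calc idist X p q ≤ idist X p a + idist X a b + idist X b q := by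
        rw [add_assoc]
        exact (idist_triangle p a q).trans (add_le_add_right (idist_triangle a b q) _)
    _ ≤ edist p a + idist X a b + edist b q := by
        gcongr <;> exact idist_le_edist_of_segment_subset ‹_›

lemma edist_add_idist_add_edist_comm (p a b q : Pt) :
    edist p a + idist X a b + edist b q = edist q b + idist X b a + edist a p := by
  rw [edist_comm p a, idist_comm a b, edist_comm b q, add_comm, add_comm (edist a p), add_assoc]

end IntrinsicDistance

section Gate

variable {X S R G : Set Pt}

lemma exists_mem_gate_of_path {γ : ℝ → Pt} (hXSR : X ⊆ S ∪ R) (hS : IsClosed S)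
    (hR : IsClosed R) (hSR : S ∩ R ⊆ G) (hc : ContinuousOn γ (Icc 0 1))
    (hX : γ '' Icc 0 1 ⊆ X) (h0 : γ 0 ∉ S \ G) (h1 : γ 1 ∉ R) :
    ∃ t ∈ Icc (0 : ℝ) 1, γ t ∈ G := by
  by_contra! hγG
  have hdisj : γ '' Icc 0 1 ∩ (S ∩ R) = ∅ := by
    refine eq_empty_of_forall_notMem ?_
    rintro _ ⟨⟨t, ht, rfl⟩, hSR'⟩
    exact hγG t ht (hSR hSR')
  rcases isPreconnected_iff_subset_of_disjoint_closed.1 (isPreconnected_Icc.image γ hc) S R hS hR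
    (hX.trans hXSR) hdisj with hγS | hγR
  · exact h0 ⟨hγS (mem_image_of_mem γ (left_mem_Icc.2 zero_le_one)),
      hγG 0 (left_mem_Icc.2 zero_le_one)⟩
  · exact h1 (hγR (mem_image_of_mem γ (right_mem_Icc.2 zero_le_one)))

lemma iInf_idist_add_edist_le_idist {z x : Pt} (hXSR : X ⊆ S ∪ R) (hS : IsClosed S)
    (hR : IsClosed R) (hSR : S ∩ R ⊆ G) (hz : z ∉ S \ G) (hx : x ∉ R) :
    ⨅ g ∈ G, idist X z g + edist g x ≤ idist X z x := by
  refine le_idist fun γ hc hX h0 h1 => ?_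
  obtain ⟨t, ht, hγt⟩ :=
    exists_mem_gate_of_path hXSR hS hR hSR hc hX (h0 ▸ hz) (h1 ▸ hx)
  have h0t : Icc 0 t ⊆ Icc (0 : ℝ) 1 := Icc_subset_Icc_right ht.2
  calc ⨅ g ∈ G, idist X z g + edist g x ≤ idist X z (γ t) + edist (γ t) x := iInf₂_le _ hγt
    _ ≤ eVariationOn γ (Icc 0 t) + eVariationOn γ (Icc t 1) := by
        rw [← h0, ← h1]
        exact add_le_add
          (idist_le_eVariationOn_Icc ht.1 (hc.mono h0t) ((image_mono h0t).trans hX))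
          (eVariationOn.edist_le γ (left_mem_Icc.2 ht.2) (right_mem_Icc.2 ht.2))
    _ = eVariationOn γ (Icc 0 1) := by
        simpa using eVariationOn.Icc_add_Icc γ (s := univ) ht.1 ht.2 (mem_univ t)

end Gate

namespace PlaneNetwork

variable {N : PlaneNetwork} {u v u' v' p q w z : Pt}

lemma IsEdge.symm (h : N.IsEdge u v) : N.IsEdge v u :=
  Or.symm h

lemma IsEdge.ne (h : N.IsEdge u v) : u ≠ v :=
  h.elim (N.ends_ne _) fun h => (N.ends_ne _ h).symm

lemma IsEdge.exists_mem (h : N.IsEdge u v) :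
    ∃ e ∈ N.Edg, segment ℝ e.1 e.2 = segment ℝ u v ∧ ({e.1, e.2} : Set Pt) = {u, v} := by
  rcases h with h | h
  · exact ⟨_, h, rfl, rfl⟩
  · exact ⟨_, h, segment_symm ℝ v u, pair_comm v u⟩

lemma IsEdge.segment_subset_locus (h : N.IsEdge u v) : segment ℝ u v ⊆ N.locus := by
  obtain ⟨e, he, hseg, -⟩ := h.exists_mem
  exact hseg ▸ subset_biUnion_of_mem (u := fun e : Pt × Pt => segment ℝ e.1 e.2) he

lemma IsEdge.segment_subset_locus_of_mem (h : N.IsEdge u v) {x y : Pt}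
    (hx : x ∈ segment ℝ u v) (hy : y ∈ segment ℝ u v) : segment ℝ x y ⊆ N.locus :=
  ((convex_segment u v).segment_subset hx hy).trans h.segment_subset_locus

lemma IsEdge.disjoint_segment_openSegment (he : N.IsEdge u v) (he' : N.IsEdge u' v')
    (hdiff : ({u, v} : Set Pt) ≠ {u', v'}) : Disjoint (segment ℝ u v) (openSegment ℝ u' v') := by
  obtain ⟨e, heN, hseg, hpair⟩ := he.exists_mem
  obtain ⟨f, hfN, hseg', hpair'⟩ := he'.exists_mem
  have hef : e ≠ f := by
    rintro rfl
    exact hdiff (hpair.symm.trans hpair')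
  refine disjoint_left.2 fun x hx hx' => notMem_pair_of_mem_openSegment he'.ne hx' ?_
  exact hpair' ▸ (N.plane e heN f hfN hef
    ⟨hseg ▸ hx, hseg' ▸ openSegment_subset_segment ℝ _ _ hx'⟩).2

/-- A path in the locus from `z` into the interior of the edge `uv` passes through `u` or `v`. -/
lemma IsEdge.idist_add_edist_le_or (he : N.IsEdge u v) (hw : w ∈ segment ℝ u v)
    (hz : z ∉ openSegment ℝ u v) :
    idist N.locus z u + edist u w ≤ idist N.locus z w ∨
      idist N.locus z v + edist v w ≤ idist N.locus z w := by
  rw [← insert_endpoints_openSegment] at hw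
  rcases hw with rfl | rfl | hw
  · simp
  · simp
  obtain ⟨e, heN, hseg, hpair⟩ := he.exists_mem
  set R := ⋃ f ∈ N.Edg.erase e, segment ℝ f.1 f.2
  have hlocus : N.locus ⊆ segment ℝ u v ∪ R := by
    intro x hx
    obtain ⟨f, hf, hxf⟩ := mem_iUnion₂.1 hx
    by_cases hfe : f = e
    · subst hfe
      exact Or.inl (hseg ▸ hxf)
    · exact Or.inr (mem_biUnion (Finset.mem_erase.2 ⟨hfe, hf⟩) hxf)
  have hSR : segment ℝ u v ∩ R ⊆ {u, v} := by
    rintro x ⟨hxS, hxR⟩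
    obtain ⟨f, hf, hxf⟩ := mem_iUnion₂.1 hxR
    rw [Finset.mem_erase] at hf
    exact hpair ▸ (N.plane e heN f hf.2 (Ne.symm hf.1) ⟨hseg ▸ hxS, hxf⟩).1
  have hR : IsClosed R := isClosed_biUnion_finset fun f _ => isClosed_segment f.1 f.2
  have hz' : z ∉ segment ℝ u v \ {u, v} := by
    rintro ⟨hzS, hzG⟩
    rw [← insert_endpoints_openSegment] at hzS
    rcases hzS with rfl | rfl | hzO
    · exact hzG (mem_insert _ _)
    · exact hzG (mem_insert_of_mem _ rfl)
    · exact hz hzO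
  have hwR : w ∉ R := fun hwR =>
    notMem_pair_of_mem_openSegment he.ne hw (hSR ⟨openSegment_subset_segment ℝ u v hw, hwR⟩)
  have := iInf_idist_add_edist_le_idist hlocus (isClosed_segment u v) hR hSR hz' hwR
  rwa [iInf_pair, inf_le_iff] at this

/-- Were the inequality strict, points of the edge slightly closer to `u` than `p` would be
farther from `q` than `p`, whichever endpoint a shortest path to them enters through. -/
lemma IsEdge.idist_add_edist_le_of_farthest (he : N.IsEdge u v) (hp : p ∈ segment ℝ u v)
    (hq : q ∉ openSegment ℝ u v)
    (hfar : ∀ x ∈ N.locus, idist N.locus q x ≤ idist N.locus q p) :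
    idist N.locus q u + edist u p ≤ idist N.locus q p := by
  by_contra! hlt
  rw [segment_eq_image_lineMap] at hp
  obtain ⟨t, ht, rfl⟩ := hp
  set x : ℝ → Pt := ⇑(AffineMap.lineMap (k := ℝ) u v)
  have ht0 : 0 < t := by
    refine ht.1.lt_of_ne fun h => ?_
    simp [x, ← h] at hlt
  have hnear : ∀ᶠ s in 𝓝[<] t, idist N.locus q (x t) < idist N.locus q u + edist u (x s) :=
    (((continuous_const.add (continuous_const.edist AffineMap.lineMap_continuous)).tendsto t
      ).mono_left nhdsWithin_le_nhds).eventually_const_lt hlt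
  obtain ⟨s, hs_near, hs⟩ := (hnear.and (Ioo_mem_nhdsLT ht0)).exists
  have hxs : x s ∈ segment ℝ u v := by
    rw [segment_eq_image_lineMap]
    exact ⟨s, ⟨hs.1.le, (hs.2.trans_le ht.2).le⟩, rfl⟩
  have hv_near : idist N.locus q (x t) < idist N.locus q v + edist v (x s) := by
    rcases eq_or_ne (idist N.locus q v) ⊤ with h | h
    · simpa [h] using hlt.trans_le le_top
    have hxt : x t ∈ segment ℝ u v := by
      rw [segment_eq_image_lineMap]
      exact ⟨t, ht, rfl⟩
    calc idist N.locus q (x t) ≤ idist N.locus q v + edist v (x t) :=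
          (idist_triangle q v (x t)).trans <| add_le_add_right (idist_le_edist_of_segment_subset
            (he.segment_subset_locus_of_mem (right_mem_segment ℝ u v) hxt)) _
      _ < idist N.locus q v + edist v (x s) :=
          ENNReal.add_lt_add_left h (edist_right_lineMap_lt he.ne hs.2 ht.2)
  have hxs_far := hfar _ (he.segment_subset_locus hxs)
  rcases he.idist_add_edist_le_or hxs hq with h | h
  · exact (hs_near.trans_le h).not_ge hxs_far
  · exact (hv_near.trans_le h).not_ge hxs_far

lemma IsEdge.idist_eq_edist_add_idist_of_farthest (he : N.IsEdge u v) (hp : p ∈ segment ℝ u v)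
    (hq : q ∉ openSegment ℝ u v)
    (hfar : ∀ x ∈ N.locus, idist N.locus q x ≤ idist N.locus q p) :
    idist N.locus p q = edist p u + idist N.locus u q ∧
      idist N.locus p q = edist p v + idist N.locus v q := by
  have key : ∀ {a b : Pt}, N.IsEdge a b → p ∈ segment ℝ a b → q ∉ openSegment ℝ a b →
      idist N.locus p q = edist p a + idist N.locus a q := fun hab hpab hqab => by
    refine le_antisymm ((idist_triangle p _ q).trans (add_le_add_left
      (idist_le_edist_of_segment_subset (hab.segment_subset_locus_of_mem hpab
        (left_mem_segment ℝ _ _))) _)) ?_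
    rw [idist_comm p q, idist_comm _ q, edist_comm, add_comm]
    exact hab.idist_add_edist_le_of_farthest hpab hqab hfar
  exact ⟨key he hp hq, key he.symm (segment_symm ℝ u v ▸ hp) (openSegment_symm ℝ u v ▸ hq)⟩

lemma IsEdge.idist_eq_through_endpoint_or (he' : N.IsEdge u' v') (hq : q ∈ segment ℝ u' v')
    (hw : w ∉ openSegment ℝ u' v') (hpw : segment ℝ p w ⊆ N.locus)
    (h : idist N.locus p q = edist p w + idist N.locus w q) :
    idist N.locus p q = edist p w + idist N.locus w u' + edist u' q ∨
      idist N.locus p q = edist p w + idist N.locus w v' + edist v' q := by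
  have through : ∀ a ∈ segment ℝ u' v', idist N.locus w a + edist a q ≤ idist N.locus w q →
      idist N.locus p q = edist p w + idist N.locus w a + edist a q := fun a ha hwa =>
    le_antisymm (idist_le_edist_add_idist_add_edist hpw (he'.segment_subset_locus_of_mem ha hq))
      (by rw [h, add_assoc]; gcongr)
  exact (he'.idist_add_edist_le_or hq hw).imp (through _ (left_mem_segment ℝ u' v'))
    (through _ (right_mem_segment ℝ u' v'))

lemma IsEdge.idist_eq_through_endpoint_or' (he : N.IsEdge u v) (hp : p ∈ segment ℝ u v)
    (hw : w ∉ openSegment ℝ u v) (hwq : segment ℝ w q ⊆ N.locus)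
    (h : idist N.locus p q = edist q w + idist N.locus w p) :
    idist N.locus p q = edist p u + idist N.locus u w + edist w q ∨
      idist N.locus p q = edist p v + idist N.locus v w + edist w q := by
  have := he.idist_eq_through_endpoint_or hp hw (segment_symm ℝ w q ▸ hwq)
    (idist_comm (X := N.locus) p q ▸ h)
  rwa [idist_comm q p, edist_add_idist_add_edist_comm q w u p,
    edist_add_idist_add_edist_comm q w v p] at this

end PlaneNetwork

theorem stmt6_general (N : PlaneNetwork) (u v u' v' p q : Pt)
    (he : N.IsEdge u v) (he' : N.IsEdge u' v')
    (hdiff : ({u, v} : Set Pt) ≠ {u', v'})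
    (hp : p ∈ segment ℝ u v) (hq : q ∈ segment ℝ u' v')
    (hdiam : idist N.locus p q = idiam N.locus) :
    (idist N.locus p q = edist p u + idist N.locus u q ∧
     idist N.locus p q = edist p v + idist N.locus v q ∧
     idist N.locus p q = edist q u' + idist N.locus u' p ∧
     idist N.locus p q = edist q v' + idist N.locus v' p) ∧
    ((idist N.locus p q = edist p u + idist N.locus u u' + edist u' q ∧
      idist N.locus p q = edist p v + idist N.locus v v' + edist v' q) ∨
     (idist N.locus p q = edist p u + idist N.locus u v' + edist v' q ∧
      idist N.locus p q = edist p v + idist N.locus v u' + edist u' q)) := by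
  have hdisj := he.disjoint_segment_openSegment he' hdiff
  have hdisj' := he'.disjoint_segment_openSegment he hdiff.symm
  have hp_far : ∀ x ∈ N.locus, idist N.locus q x ≤ idist N.locus q p := fun x hx =>
    (idist_le_idiam (he'.segment_subset_locus hq) hx).trans
      (hdiam.symm.trans (idist_comm p q)).le
  have hq_far : ∀ x ∈ N.locus, idist N.locus p x ≤ idist N.locus p q := fun x hx =>
    (idist_le_idiam (he.segment_subset_locus hp) hx).trans hdiam.symm.le
  obtain ⟨via_u, via_v⟩ :=
    he.idist_eq_edist_add_idist_of_farthest hp (disjoint_left.1 hdisj' hq) hp_far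
  obtain ⟨via_u', via_v'⟩ :=
    he'.idist_eq_edist_add_idist_of_farthest hq (disjoint_left.1 hdisj hp) hq_far
  rw [idist_comm q p] at via_u' via_v'
  refine ⟨⟨via_u, via_v, via_u', via_v'⟩, ?_⟩
  have hu := left_mem_segment ℝ u v
  have hv := right_mem_segment ℝ u v
  have hu' := left_mem_segment ℝ u' v'
  have hv' := right_mem_segment ℝ u' v'
  have row_u := he'.idist_eq_through_endpoint_or hq (disjoint_left.1 hdisj hu)
    (he.segment_subset_locus_of_mem hp hu) via_u
  have row_v := he'.idist_eq_through_endpoint_or hq (disjoint_left.1 hdisj hv)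
    (he.segment_subset_locus_of_mem hp hv) via_v
  have col_u' := he.idist_eq_through_endpoint_or' hp (disjoint_left.1 hdisj' hu')
    (he'.segment_subset_locus_of_mem hu' hq) via_u'
  have col_v' := he.idist_eq_through_endpoint_or' hp (disjoint_left.1 hdisj' hv')
    (he'.segment_subset_locus_of_mem hv' hq) via_v'
  tauto

/-- If `p`, `q` are diametral points lying on two different non-pendant edges
`uv` and `u'v'`, then the diameter can be realized through each of the four endpoints, and
there are two shortest `p`-`q` paths `P₁`, `P₂` with either `u,u' ∈ P₁` and `v,v' ∈ P₂`,
or `u,v' ∈ P₁` and `v,u' ∈ P₂`. -/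
theorem stmt6 (N : PlaneNetwork) (hconn : N.Connected) (u v u' v' p q : Pt)
    (he : N.IsEdge u v) (he' : N.IsEdge u' v')
    (hnp : ¬N.IsPendantVertex u ∧ ¬N.IsPendantVertex v)
    (hnp' : ¬N.IsPendantVertex u' ∧ ¬N.IsPendantVertex v')
    (hdiff : ({u, v} : Set Pt) ≠ {u', v'})
    (hp : p ∈ segment ℝ u v) (hq : q ∈ segment ℝ u' v')
    (hdiam : idist N.locus p q = idiam N.locus) :
    (idist N.locus p q = edist p u + idist N.locus u q ∧
     idist N.locus p q = edist p v + idist N.locus v q ∧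
     idist N.locus p q = edist q u' + idist N.locus u' p ∧
     idist N.locus p q = edist q v' + idist N.locus v' p) ∧
    ((idist N.locus p q = edist p u + idist N.locus u u' + edist u' q ∧
      idist N.locus p q = edist p v + idist N.locus v v' + edist v' q) ∨
     (idist N.locus p q = edist p u + idist N.locus u v' + edist v' q ∧
      idist N.locus p q = edist p v + idist N.locus v u' + edist u' q)) :=
  stmt6_general N u v u' v' p q he he' hdiff hp hq hdiam
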